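/- Let G₁, G₂, K, W, L ∈ ℂ[t][x,y,z] satisfy K·G₁ + W·G₂ = z·L. Assume G₁(x,y,0)·G₂(x,y,0) ≠ 0 and that G₁(x,y,0) and G₂(x,y,0) are coprime in ℂ[t][x,y] (every common divisor is a unit). Then either z divides both K and W, or there exist U₁, U₂, U₃ ∈ ℂ[t][x,y,z] such that L = U₁·G₁(x,y,0) + U₂·G₂(x,y,0) + z·U₃. -/

import Mathlib

/-!
Reduce modulo `z`, writing `g₁, g₂, k, w` for `G₁, G₂, K, W` at `z = 0`. Then `k g₁ + w g₂ = 0`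
in `ℂ[t][x,y]`, and coprimality of `g₁, g₂` in this UFD forces the syzygy to be a multiple of the
Koszul one: `k = c g₂`, `w = d g₁`. Expanding `K G₁ + W G₂` around these reductions, every term of
`z L` other than `k g₁ + w g₂ = 0` is `z` times an element of `(g₁, g₂, z)`, and `z` cancels.
-/

open MvPolynomial

/-- Substitution `z = 0`: the map `ℂ[t][x,y,z] → ℂ[t][x,y]`, `P ↦ P(x,y,0)`. -/
noncomputable def subZ0 :
    MvPolynomial (Fin 3) (Polynomial ℂ) →ₐ[Polynomial ℂ] MvPolynomial (Fin 2) (Polynomial ℂ) :=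
  MvPolynomial.aeval
    ![(MvPolynomial.X 0 : MvPolynomial (Fin 2) (Polynomial ℂ)), MvPolynomial.X 1, 0]

/-- The inclusion `ℂ[t][x,y] ⊆ ℂ[t][x,y,z]`. -/
noncomputable def embXY :
    MvPolynomial (Fin 2) (Polynomial ℂ) →ₐ[Polynomial ℂ] MvPolynomial (Fin 3) (Polynomial ℂ) :=
  MvPolynomial.rename Fin.castSucc

theorem MvPolynomial.algHom_sub_mem_of_forall_X {R σ A : Type*} [CommRing R] [CommRing A]
    [Algebra R A] (φ ψ : MvPolynomial σ R →ₐ[R] A) (I : Ideal A)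
    (hX : ∀ i, φ (X i) - ψ (X i) ∈ I) (P : MvPolynomial σ R) : φ P - ψ P ∈ I := by
  have hquot : (Ideal.Quotient.mkₐ R I).comp φ = (Ideal.Quotient.mkₐ R I).comp ψ :=
    algHom_ext fun i => by simpa [Ideal.Quotient.mkₐ_eq_mk] using Ideal.Quotient.eq.mpr (hX i)
  simpa [Ideal.Quotient.mkₐ_eq_mk] using Ideal.Quotient.eq.mp (AlgHom.congr_fun hquot P)

theorem subZ0_X_two : subZ0 (X 2) = 0 := by
  simp [subZ0]

theorem X_two_dvd_sub_embXY_subZ0 (P : MvPolynomial (Fin 3) (Polynomial ℂ)) :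
    X 2 ∣ P - embXY (subZ0 P) := by
  rw [← Ideal.mem_span_singleton]
  refine algHom_sub_mem_of_forall_X (AlgHom.id _ _) (embXY.comp subZ0) _ (fun i => ?_) P
  fin_cases i <;> simp [subZ0, embXY]

theorem IsRelPrime.dvd_and_dvd_of_mul_add_mul_eq_zero {α : Type*} [CommRing α]
    [DecompositionMonoid α] {a b k w : α} (hab : IsRelPrime a b) (h : k * a + w * b = 0) :
    b ∣ k ∧ a ∣ w := by
  constructor
  · exact hab.symm.dvd_of_dvd_mul_right ⟨-w, by linear_combination h⟩
  · exact hab.dvd_of_dvd_mul_right ⟨-k, by linear_combination h⟩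

theorem exists_eq_add_of_mul_add_mul_eq_mul {A : Type*} [CommRing A]
    {z K W G₁ G₂ L k w g₁ g₂ : A} (hz : IsLeftRegular z) (hKW : K * G₁ + W * G₂ = z * L)
    (hK : z ∣ K - k) (hW : z ∣ W - w) (hG₁ : z ∣ G₁ - g₁) (hG₂ : z ∣ G₂ - g₂)
    (hkw : k * g₁ + w * g₂ = 0) (hk : g₂ ∣ k) (hw : g₁ ∣ w) :
    ∃ U₁ U₂ U₃ : A, L = U₁ * g₁ + U₂ * g₂ + z * U₃ := by
  obtain ⟨K', hK'⟩ := hK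
  obtain ⟨W', hW'⟩ := hW
  obtain ⟨G₁', hG₁'⟩ := hG₁
  obtain ⟨G₂', hG₂'⟩ := hG₂
  obtain ⟨c, rfl⟩ := hk
  obtain ⟨d, rfl⟩ := hw
  refine ⟨d * G₂' + K', c * G₁' + W', K' * G₁' + W' * G₂', hz ?_⟩
  linear_combination hkw - hKW + G₁ * hK' + G₂ * hW' + (g₂ * c + z * K') * hG₁'
    + (g₁ * d + z * W') * hG₂'

theorem division_lemma_at_infinity_general
    (G₁ G₂ K W L : MvPolynomial (Fin 3) (Polynomial ℂ))
    (hKW : K * G₁ + W * G₂ = MvPolynomial.X 2 * L)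
    (hcop : ∀ q : MvPolynomial (Fin 2) (Polynomial ℂ), q ∣ subZ0 G₁ → q ∣ subZ0 G₂ → IsUnit q) :
    (MvPolynomial.X 2 ∣ K ∧ MvPolynomial.X 2 ∣ W) ∨
      ∃ U₁ U₂ U₃ : MvPolynomial (Fin 3) (Polynomial ℂ),
        L = U₁ * embXY (subZ0 G₁) + U₂ * embXY (subZ0 G₂) + MvPolynomial.X 2 * U₃ := by
  right
  have hred : subZ0 K * subZ0 G₁ + subZ0 W * subZ0 G₂ = 0 := by
    simpa [subZ0_X_two] using congrArg subZ0 hKW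
  obtain ⟨hK, hW⟩ := IsRelPrime.dvd_and_dvd_of_mul_add_mul_eq_zero hcop hred
  exact exists_eq_add_of_mul_add_mul_eq_mul isRegular_X.left hKW
    (X_two_dvd_sub_embXY_subZ0 K) (X_two_dvd_sub_embXY_subZ0 W)
    (X_two_dvd_sub_embXY_subZ0 G₁) (X_two_dvd_sub_embXY_subZ0 G₂)
    (by simpa using congrArg embXY hred) (map_dvd embXY hK) (map_dvd embXY hW)

/-- if `K·G₁ + W·G₂ = z·L` in `ℂ[t][x,y,z]`, with `G₁(x,y,0)·G₂(x,y,0) ≠ 0`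
and `G₁(x,y,0)`, `G₂(x,y,0)` coprime in `ℂ[t][x,y]`, then either `z` divides both `K`
and `W`, or `L = U₁·G₁(x,y,0) + U₂·G₂(x,y,0) + z·U₃` for some `U₁, U₂, U₃`. -/
theorem division_lemma_at_infinity
    (G₁ G₂ K W L : MvPolynomial (Fin 3) (Polynomial ℂ))
    (hKW : K * G₁ + W * G₂ = MvPolynomial.X 2 * L)
    (hG0 : subZ0 G₁ * subZ0 G₂ ≠ 0)
    (hcop : ∀ q : MvPolynomial (Fin 2) (Polynomial ℂ), q ∣ subZ0 G₁ → q ∣ subZ0 G₂ → IsUnit q) :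
    (MvPolynomial.X 2 ∣ K ∧ MvPolynomial.X 2 ∣ W) ∨
      ∃ U₁ U₂ U₃ : MvPolynomial (Fin 3) (Polynomial ℂ),
        L = U₁ * embXY (subZ0 G₁) + U₂ * embXY (subZ0 G₂) + MvPolynomial.X 2 * U₃ :=
  division_lemma_at_infinity_general G₁ G₂ K W L hKW hcop
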